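/- arXiv:2209.10244 — 2 statements merged into one kernel-verified Lean document; each statement's English description precedes it below -/
import Mathlib

section
/- (Maximum effort LMI constraints for VIC.) Let A_1, …, A_n be real m×m matrices, W_1, …, W_n real p×m matrices, u_max ≥ 0, and P a real symmetric positive definite m×m matrix such that for every i = 1, …, n: (i) A_iᵀ P A_i ⪯ P, and (ii) the block matrix [[u_max²·I_p, W_i], [W_iᵀ, P]] is positive semidefinite. Then every trajectory x of the discrete-time polytopic LPV system (with weights h_i(k)) satisfying x(0)ᵀ P x(0) ≤ 1 obeys the control-effort bound ‖(Σ_i h_i(k) W_i) x(k)‖ ≤ u_max for all k ∈ ℕ. -/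
open Matrix BigOperators

/-- The Euclidean norm of a vector in `ℝ^p`. -/
noncomputable def euclNorm {d : ℕ} (v : Fin d → ℝ) : ℝ :=
  ‖(EuclideanSpace.equiv (Fin d) ℝ).symm v‖

/-!
`V x = xᵀ P x` is a convex function of `x`, so `V (A i x) ≤ V x` at the vertices gives
`V (A(h) x) ≤ V x` for every convex combination `A(h)`: the ellipsoid `V ≤ 1` is invariant.
The block LMIs are affine in `W`, so they also hold for `W(h) = ∑ h i • W i`. Evaluating that
block form at `(t • W(h) x, x)` gives a quadratic in `t` that is never negative; its
discriminant yields `‖W(h) x‖² ≤ u_max² · V x ≤ u_max²`.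
-/

namespace Matrix

variable {ι m n : Type*}

lemma dotProduct_mulVec_comm_of_isHermitian [Fintype n] {P : Matrix n n ℝ} (hP : P.IsHermitian)
    (x y : n → ℝ) : y ⬝ᵥ P *ᵥ x = x ⬝ᵥ P *ᵥ y := by
  rw [dotProduct_mulVec, ← vecMul_transpose, ← conjTranspose_eq_transpose_of_trivial, hP.eq,
    dotProduct_comm]

theorem PosSemidef.convexOn_dotProduct_mulVec [Fintype n] {P : Matrix n n ℝ} (hP : P.PosSemidef) :
    ConvexOn ℝ Set.univ fun x : n → ℝ => x ⬝ᵥ P *ᵥ x := by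
  refine ⟨convex_univ, fun x _ y _ a b ha hb hab => ?_⟩
  have hxy := mul_nonneg (mul_nonneg ha hb) (hP.dotProduct_mulVec_nonneg (x - y))
  have hsymm := dotProduct_mulVec_comm_of_isHermitian hP.isHermitian x y
  obtain rfl : b = 1 - a := by linarith
  simp only [star_trivial, mulVec_add, mulVec_sub, mulVec_smul, dotProduct_add, add_dotProduct,
    dotProduct_sub, sub_dotProduct, dotProduct_smul, smul_dotProduct, smul_eq_mul] at hxy ⊢
  nlinarith

lemma dotProduct_mulVec_mulVec_le_of_posSemidef_sub [Fintype n] {A P : Matrix n n ℝ}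
    (hA : (P - Aᵀ * P * A).PosSemidef) (x : n → ℝ) :
    A *ᵥ x ⬝ᵥ P *ᵥ (A *ᵥ x) ≤ x ⬝ᵥ P *ᵥ x := by
  have := hA.dotProduct_mulVec_nonneg x
  rw [star_trivial, sub_mulVec, dotProduct_sub, ← mulVec_mulVec, ← mulVec_mulVec,
    dotProduct_mulVec x Aᵀ, vecMul_transpose] at this
  linarith

lemma dotProduct_mulVec_sum_smul_mulVec_le [Fintype ι] [Fintype n] {P : Matrix n n ℝ}
    (hP : P.PosSemidef) {A : ι → Matrix n n ℝ} (hA : ∀ i, (P - (A i)ᵀ * P * A i).PosSemidef)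
    {h : ι → ℝ} (hh : ∀ i, 0 ≤ h i) (hsum : ∑ i, h i = 1) (x : n → ℝ) :
    (∑ i, h i • A i) *ᵥ x ⬝ᵥ P *ᵥ ((∑ i, h i • A i) *ᵥ x) ≤ x ⬝ᵥ P *ᵥ x := by
  have hcomb : (∑ i, h i • A i) *ᵥ x = ∑ i, h i • (A i *ᵥ x) := by
    simp only [sum_mulVec, smul_mulVec]
  calc (∑ i, h i • A i) *ᵥ x ⬝ᵥ P *ᵥ ((∑ i, h i • A i) *ᵥ x)
      ≤ ∑ i, h i • (A i *ᵥ x ⬝ᵥ P *ᵥ (A i *ᵥ x)) := by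
        rw [hcomb]
        exact hP.convexOn_dotProduct_mulVec.map_sum_le (fun i _ => hh i) hsum (by simp)
    _ ≤ ∑ i, h i • (x ⬝ᵥ P *ᵥ x) := by
        gcongr with i
        · exact hh i
        · exact dotProduct_mulVec_mulVec_le_of_posSemidef_sub (hA i) x
    _ = x ⬝ᵥ P *ᵥ x := by rw [← Finset.sum_smul, hsum, one_smul]

lemma posSemidef_fromBlocks_sum_smul [Fintype ι] {C : Matrix m m ℝ} {D : Matrix n n ℝ}
    {W : ι → Matrix m n ℝ} (hW : ∀ i, (fromBlocks C (W i) (W i)ᵀ D).PosSemidef) {h : ι → ℝ}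
    (hh : ∀ i, 0 ≤ h i) (hsum : ∑ i, h i = 1) :
    (fromBlocks C (∑ i, h i • W i) (∑ i, h i • W i)ᵀ D).PosSemidef := by
  have hcomb : fromBlocks C (∑ i, h i • W i) (∑ i, h i • W i)ᵀ D
      = ∑ i, h i • fromBlocks C (W i) (W i)ᵀ D := by
    ext (a | a) (b | b) <;>
      simp [Matrix.sum_apply, ← Finset.sum_mul, hsum]
  rw [hcomb]
  exact posSemidef_sum _ fun i _ => (hW i).smul (hh i)

lemma dotProduct_self_mulVec_le_of_posSemidef_fromBlocks [Fintype m] [Fintype n] [DecidableEq m]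
    {c : ℝ} (hc : 0 ≤ c) {B : Matrix m n ℝ} {D : Matrix n n ℝ}
    (hB : (fromBlocks (c • 1) B Bᵀ D).PosSemidef)
    (v : n → ℝ) : B *ᵥ v ⬝ᵥ B *ᵥ v ≤ c * (v ⬝ᵥ D *ᵥ v) := by
  set s := B *ᵥ v ⬝ᵥ B *ᵥ v
  -- The block form along `(t • B v, v)` is a quadratic in `t`; no inverse of `c` is needed.
  have hquad : ∀ t : ℝ, 0 ≤ (c * s) * (t * t) + 2 * s * t + v ⬝ᵥ D *ᵥ v := by
    intro t
    have := hB.dotProduct_mulVec_nonneg (Sum.elim (t • B *ᵥ v) v)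
    rw [star_trivial, fromBlocks_mulVec] at this
    simp only [Sum.elim_comp_inl, Sum.elim_comp_inr, sumElim_dotProduct_sumElim, dotProduct_add,
      smul_mulVec, one_mulVec, mulVec_smul, dotProduct_smul, smul_dotProduct, smul_eq_mul] at this
    rw [dotProduct_mulVec v, vecMul_transpose] at this
    linarith
  have hdisc := discrim_le_zero hquad
  rw [discrim] at hdisc
  rcases (show 0 ≤ s by simpa using dotProduct_self_star_nonneg (B *ᵥ v)).eq_or_lt with hs | hs
  · rw [← hs]
    exact mul_nonneg hc (by simpa using hquad 0)
  · refine le_of_mul_le_mul_left ?_ hs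
    nlinarith

end Matrix

lemma sq_euclNorm {d : ℕ} (v : Fin d → ℝ) : euclNorm v ^ 2 = v ⬝ᵥ v := by
  rw [euclNorm, EuclideanSpace.norm_sq_eq]
  simp [dotProduct, sq]

lemma euclNorm_le_iff {d : ℕ} {v : Fin d → ℝ} {r : ℝ} (hr : 0 ≤ r) :
    euclNorm v ≤ r ↔ v ⬝ᵥ v ≤ r ^ 2 := by
  rw [← sq_euclNorm]
  exact (pow_le_pow_iff_left₀ (norm_nonneg _) hr two_ne_zero).symm

/-- Maximum effort LMI constraints for VIC: if the vertex LMIs `A iᵀ * P * A i ⪯ P`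
and the block LMIs `[[u_max² • I, W i], [W iᵀ, P]] ⪰ 0` hold for a symmetric
positive definite `P`, then every trajectory of the polytopic LPV system starting
in the ellipsoid `{x : xᵀ P x ≤ 1}` obeys the control-effort bound
`‖(∑ i, h k i • W i) x k‖ ≤ u_max` for all `k`. -/
theorem polytopic_lpv_effort_bound {m n p : ℕ}
    (A : Fin n → Matrix (Fin m) (Fin m) ℝ)
    (W : Fin n → Matrix (Fin p) (Fin m) ℝ)
    (umax : ℝ) (humax : 0 ≤ umax)
    (P : Matrix (Fin m) (Fin m) ℝ) (hP : P.PosDef)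
    (hLMI : ∀ i, (P - (A i)ᵀ * P * A i).PosSemidef)
    (hblock : ∀ i,
      (fromBlocks (umax ^ 2 • (1 : Matrix (Fin p) (Fin p) ℝ)) (W i) (W i)ᵀ P).PosSemidef)
    (x : ℕ → Fin m → ℝ) (h : ℕ → Fin n → ℝ)
    (hh : ∀ k i, 0 ≤ h k i) (hsum : ∀ k, ∑ i, h k i = 1)
    (hdyn : ∀ k, x (k + 1) = (∑ i, h k i • A i) *ᵥ x k)
    (hx0 : x 0 ⬝ᵥ (P *ᵥ x 0) ≤ 1) :
    ∀ k, euclNorm ((∑ i, h k i • W i) *ᵥ x k) ≤ umax := by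
  intro k
  have hellipsoid : x k ⬝ᵥ P *ᵥ x k ≤ 1 := by
    induction k with
    | zero => exact hx0
    | succ k ih =>
      rw [hdyn]
      exact (dotProduct_mulVec_sum_smul_mulVec_le hP.posSemidef hLMI (hh k) (hsum k) _).trans ih
  rw [euclNorm_le_iff humax]
  calc _ ≤ umax ^ 2 * (x k ⬝ᵥ P *ᵥ x k) :=
        dotProduct_self_mulVec_le_of_posSemidef_fromBlocks (sq_nonneg umax)
          (posSemidef_fromBlocks_sum_smul hblock (hh k) (hsum k)) _
    _ ≤ umax ^ 2 := mul_le_of_le_one_right (sq_nonneg umax) hellipsoid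
end

section
/- Let A be a real m×m matrix and P a real symmetric positive definite m×m matrix such that P − Aᵀ P A is positive semidefinite. Then every complex eigenvalue z of A (i.e., every root z ∈ ℂ of the characteristic polynomial of A) satisfies |z| ≤ 1. -/
open Matrix Polynomial
open scoped ComplexOrder

/-! If `A v = z • v` with `v ≠ 0`, then `v* (P - Aᴴ P A) v = (1 - ‖z‖²) v* P v`; the left side is
nonnegative and `v* P v` is positive, so `‖z‖ ≤ 1`. Since the eigenvector of a real matrix may be
complex, the argument runs over `ℂ`, where real positive (semi)definite matrices stay so. -/

namespace Matrix

variable {m n 𝕜 : Type*} [RCLike 𝕜]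

lemma conjTranspose_map_algebraMap (M : Matrix m n ℝ) :
    (M.map (algebraMap ℝ 𝕜))ᴴ = Mᵀ.map (algebraMap ℝ 𝕜) := by
  rw [← conjTranspose_map _ fun r => (RCLike.conj_ofReal r).symm,
    conjTranspose_eq_transpose_of_trivial]

variable [Fintype n]

lemma PosSemidef.map_algebraMap [DecidableEq n] {M : Matrix n n ℝ} (hM : M.PosSemidef) :
    (M.map (algebraMap ℝ 𝕜)).PosSemidef := by
  obtain ⟨B, rfl⟩ : ∃ B : Matrix n n ℝ, M = Bᴴ * B := by
    open scoped MatrixOrder in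
    exact CStarAlgebra.nonneg_iff_eq_star_mul_self.mp hM.nonneg
  rw [Matrix.map_mul, conjTranspose_eq_transpose_of_trivial, ← conjTranspose_map_algebraMap]
  exact posSemidef_conjTranspose_mul_self _

lemma PosDef.map_algebraMap [DecidableEq n] {M : Matrix n n ℝ} (hM : M.PosDef) :
    (M.map (algebraMap ℝ 𝕜)).PosDef := by
  rw [hM.posSemidef.map_algebraMap.posDef_iff_det_ne_zero, ← RingHom.mapMatrix_apply,
    ← RingHom.map_det]
  simpa using hM.det_pos.ne'

lemma exists_mulVec_eq_smul_of_isRoot_charpoly {K : Type*} [Field K] [DecidableEq n]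
    {B : Matrix n n K} {z : K} (hz : B.charpoly.IsRoot z) :
    ∃ v : n → K, v ≠ 0 ∧ B *ᵥ v = z • v := by
  rw [← Matrix.charpoly_toLin', ← Module.End.hasEigenvalue_iff_isRoot_charpoly] at hz
  obtain ⟨v, hv, hv0⟩ := hz.exists_hasEigenvector
  exact ⟨v, hv0, Module.End.mem_eigenspace_iff.mp hv⟩

lemma norm_le_one_of_mulVec_eq_smul_of_posSemidef_sub {A P : Matrix n n 𝕜} (hP : P.PosDef)
    (hLyap : (P - Aᴴ * P * A).PosSemidef) {z : 𝕜} {v : n → 𝕜} (hv : v ≠ 0)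
    (hAv : A *ᵥ v = z • v) : ‖z‖ ≤ 1 := by
  set c := star v ⬝ᵥ P *ᵥ v
  have hc : 0 < c := hP.dotProduct_mulVec_pos hv
  have hquad : star v ⬝ᵥ (Aᴴ * P * A) *ᵥ v = (‖z‖ ^ 2 : ℝ) * c := by
    rw [← mulVec_mulVec, ← mulVec_mulVec, dotProduct_mulVec, vecMul_conjTranspose, star_star, hAv,
      mulVec_smul, star_smul, smul_dotProduct, dotProduct_smul, smul_smul,
      smul_eq_mul, RCLike.star_def, RCLike.conj_mul]
    norm_cast
  have hnonneg : (0 : 𝕜) ≤ ((1 - ‖z‖ ^ 2 : ℝ) : 𝕜) * c := by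
    have := hLyap.dotProduct_mulVec_nonneg v
    rwa [sub_mulVec, dotProduct_sub, hquad, ← one_sub_mul, ← RCLike.ofReal_one,
      ← RCLike.ofReal_sub] at this
  rw [RCLike.nonneg_iff, RCLike.re_ofReal_mul] at hnonneg
  rw [RCLike.pos_iff] at hc
  have hsq : ‖z‖ ^ 2 ≤ 1 := by nlinarith [hnonneg.1, hc.1]
  exact (pow_le_one_iff_of_nonneg (norm_nonneg z) two_ne_zero).mp hsq

end Matrix

/-- Nonstrict discrete-time Lyapunov eigenvalue bound: if `P` is symmetric positive
definite and `P − Aᵀ P A` is positive semidefinite, then every complex root of the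
characteristic polynomial of `A` lies in the closed unit disk. -/
theorem eigenvalues_le_one_of_lyapunov {m : ℕ}
    (A P : Matrix (Fin m) (Fin m) ℝ) (hP : P.PosDef)
    (hLMI : (P - Aᵀ * P * A).PosSemidef) :
    ∀ z : ℂ, ((A.charpoly).map (algebraMap ℝ ℂ)).IsRoot z → ‖z‖ ≤ 1 := by
  intro z hz
  rw [← charpoly_map] at hz
  obtain ⟨v, hv, hAv⟩ := exists_mulVec_eq_smul_of_isRoot_charpoly hz
  refine norm_le_one_of_mulVec_eq_smul_of_posSemidef_sub hP.map_algebraMap ?_ hv hAv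
  have hLyap := hLMI.map_algebraMap (𝕜 := ℂ)
  rwa [Matrix.map_sub _ (map_sub _), Matrix.map_mul, Matrix.map_mul,
    ← conjTranspose_map_algebraMap] at hLyap
end
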